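/- arXiv:2204.12936 — 2 statements merged into one kernel-verified Lean document; each statement's English description precedes it below -/
import Mathlib

section
/- Let σ be a permutation of size n with σₙ = n, and let k be the number of left-to-right maxima of σ. Then the number of permutations τ of size n with B(τ) = σ is exactly 2^(k−1). -/
/-- One pass of bubblesort on a list of naturals. -/
def bpass : List ℕ → List ℕ
  | [] => []
  | [a] => [a]
  | a :: b :: l => if b < a then b :: bpass (a :: l) else a :: bpass (b :: l)

/-- The identity permutation 1 2 ... n as a list. -/
def idList (n : ℕ) : List ℕ := List.map (· + 1) (List.range n)

/-- `l` is (the word of) a permutation of size `n`, i.e. a rearrangement of 1,...,n. -/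
def IsPermList (n : ℕ) (l : List ℕ) : Prop := l.Perm (idList n)

/-- position `j` of `l` holds a left-to-right maximum. -/
def IsLTRMax (l : List ℕ) (j : ℕ) : Prop :=
  j < l.length ∧ ∀ i < j, l.getD i 0 < l.getD j 0

instance (l : List ℕ) (j : ℕ) : Decidable (IsLTRMax l j) := by
  unfold IsLTRMax; infer_instance

/-- the number of left-to-right maxima of `l`. -/
def ltrCount (l : List ℕ) : ℕ :=
  ((List.range l.length).filter fun j => decide (IsLTRMax l j)).length

/-- the length of the longest suffix of `l` consisting of left-to-right maxima. -/
def suffLen (l : List ℕ) : ℕ :=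
  ((List.range l.length).takeWhile fun j => decide (IsLTRMax l (l.length - 1 - j))).length

/-- `σ` is a node of the tree `T(π)` of iterated bubblesort preimages. -/
def IsNode (n : ℕ) (π σ : List ℕ) : Prop :=
  IsPermList n σ ∧ ∃ j, bpass^[j] σ = π

/-- `σ` is a node of `T(π)` at height `j` (j passes needed to reach π, and no fewer). -/
def IsNodeAt (n : ℕ) (π σ : List ℕ) (j : ℕ) : Prop :=
  IsPermList n σ ∧ bpass^[j] σ = π ∧ ∀ i < j, bpass^[i] σ ≠ π

/-- `τ` is a leaf: it has no child, i.e. no bubblesort preimage other than itself. -/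
def IsLeafNode (n : ℕ) (τ : List ℕ) : Prop :=
  ¬ ∃ ρ, IsPermList n ρ ∧ ρ ≠ τ ∧ bpass ρ = τ

/-- `T(π)` and `T(τ)` are isomorphic as rooted trees: there is a bijection between
their node sets sending root to root and commuting with the parent map `bpass`. -/
def TreeIso (n : ℕ) (π τ : List ℕ) : Prop :=
  ∃ φ : List ℕ → List ℕ,
    (∀ σ, IsNode n π σ → IsNode n τ (φ σ)) ∧
    (∀ σ σ', IsNode n π σ → IsNode n π σ' → φ σ = φ σ' → σ = σ') ∧
    (∀ ρ, IsNode n τ ρ → ∃ σ, IsNode n π σ ∧ φ σ = ρ) ∧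
    φ π = τ ∧
    (∀ σ, IsNode n π σ → σ ≠ π → φ (bpass σ) = bpass (φ σ))

/-! Write `σ = s :: σ'`. A preimage of `σ` under one bubblesort pass either starts with `s`,
followed by a preimage of `σ'` whose first entry exceeds `s`, or arises from such a preimage
`b :: ρ` as `b :: s :: ρ`. Keeping track of a lower bound `c` for the first entry, the number
of preimages therefore doubles when `s` is a left-to-right maximum above `c` and is unchanged
otherwise, until the final maximum `n`, which has exactly one preimage `[n]`. -/

/-- The number of left-to-right maxima of `l` that exceed `c`. -/
def ltrCountAbove (c : ℕ) : List ℕ → ℕ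
  | [] => 0
  | a :: l => if c < a then ltrCountAbove a l + 1 else ltrCountAbove c l

lemma ltrCountAbove_pos {c x : ℕ} {l : List ℕ} (hx : x ∈ l) (hcx : c < x) :
    0 < ltrCountAbove c l := by
  induction l generalizing c with
  | nil => simp at hx
  | cons a l ih =>
    by_cases hca : c < a
    · simp [ltrCountAbove, hca]
    · have hxl : x ∈ l := (List.mem_cons.mp hx).resolve_left (by rintro rfl; exact hca hcx)
      simpa [ltrCountAbove, hca] using ih hxl hcx

lemma isLTRMax_cons_zero (a : ℕ) (l : List ℕ) : IsLTRMax (a :: l) 0 := by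
  simp [IsLTRMax]

lemma isLTRMax_cons_succ (a : ℕ) (l : List ℕ) (j : ℕ) :
    IsLTRMax (a :: l) (j + 1) ↔ a < l.getD j 0 ∧ IsLTRMax l j := by
  simp only [IsLTRMax, List.length_cons, Nat.add_lt_add_iff_right, Nat.forall_lt_succ_left,
    List.getD_cons_zero, List.getD_cons_succ]
  tauto

lemma ltrCountAbove_eq_length_filter (c : ℕ) (l : List ℕ) :
    ltrCountAbove c l = ((List.range l.length).filter
      fun j => decide (c < l.getD j 0 ∧ IsLTRMax l j)).length := by
  induction l generalizing c with
  | nil => rfl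
  | cons a l ih =>
    have hsucc : ∀ j, (c < (a :: l).getD (j + 1) 0 ∧ IsLTRMax (a :: l) (j + 1)) ↔
        (max c a < l.getD j 0 ∧ IsLTRMax l j) := by
      intro j
      simp only [List.getD_cons_succ, isLTRMax_cons_succ, max_lt_iff]
      tauto
    rw [List.length_cons, List.range_succ_eq_map, List.filter_cons, List.filter_map,
      List.filter_congr (q := fun j => decide (max c a < l.getD j 0 ∧ IsLTRMax l j))
        (fun j _ => by simp only [Function.comp_apply, Nat.succ_eq_add_one, hsucc])]
    by_cases hca : c < a
    · simp [ltrCountAbove, hca, ih, isLTRMax_cons_zero, max_eq_right hca.le]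
    · simp [ltrCountAbove, hca, ih, max_eq_left (not_lt.mp hca)]

lemma ltrCount_eq_ltrCountAbove_zero {l : List ℕ} (hpos : ∀ x ∈ l, 0 < x) :
    ltrCount l = ltrCountAbove 0 l := by
  rw [ltrCount, ltrCountAbove_eq_length_filter]
  congr 1
  refine List.filter_congr fun j hj => ?_
  have hj : j < l.length := List.mem_range.mp hj
  have hx : 0 < l.getD j 0 := List.getD_eq_getElem l 0 hj ▸ hpos _ (List.getElem_mem hj)
  simp only [hx, true_and]

lemma mem_idList {n x : ℕ} : x ∈ idList n ↔ 0 < x ∧ x ≤ n := by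
  simp only [idList, List.mem_map, List.mem_range]
  constructor
  · rintro ⟨i, hi, rfl⟩; omega
  · rintro ⟨hx, hxn⟩; exact ⟨x - 1, by omega, by omega⟩

lemma nodup_idList (n : ℕ) : (idList n).Nodup :=
  List.nodup_range.map fun _ _ h => by simpa using h

lemma bpass_perm (l : List ℕ) : (bpass l).Perm l := by
  induction l using bpass.induct with
  | case1 => simp [bpass]
  | case2 a => simp [bpass]
  | case3 a b l h ih =>
    simp only [bpass, if_pos h]
    exact (ih.cons b).trans (List.Perm.swap a b l)
  | case4 a b l h ih =>
    simp only [bpass, if_neg h]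
    exact ih.cons a

def bpassPreimAbove (c : ℕ) (σ : List ℕ) : Set (List ℕ) :=
  {τ | bpass τ = σ ∧ c < τ.headD 0}

lemma bpassPreimAbove_finite (c : ℕ) (σ : List ℕ) : (bpassPreimAbove c σ).Finite :=
  σ.permutations.toFinset.finite_toSet.subset fun τ ⟨h, _⟩ => by
    simpa [List.mem_permutations] using h ▸ (bpass_perm τ).symm

lemma bpassPreimAbove_singleton {c M : ℕ} (hc : c < M) : bpassPreimAbove c [M] = {[M]} := by
  ext τ
  refine ⟨fun ⟨h, _⟩ => ?_, by rintro rfl; exact ⟨by simp [bpass], hc⟩⟩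
  obtain ⟨x, rfl⟩ : ∃ x, τ = [x] :=
    List.length_eq_one_iff.mp (by rw [← (bpass_perm τ).length_eq, h]; rfl)
  simpa [bpass] using h

/-- For `ρ = b :: l`, `ρ.insertIdx 1 s = b :: s :: l`: the pass carries `b` past `s`. -/
lemma bpass_eq_cons_iff {s : ℕ} {σ τ : List ℕ} (hσ : σ ≠ []) (hs : s ∉ σ) :
    bpass τ = s :: σ ↔
      ∃ ρ, bpass ρ = σ ∧ s < ρ.headD 0 ∧ (τ = s :: ρ ∨ τ = ρ.insertIdx 1 s) := by
  constructor
  · intro h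
    rcases τ with _ | ⟨a, _ | ⟨b, l⟩⟩
    · simp [bpass] at h
    · simp [bpass] at h; exact (hσ h.2).elim
    · by_cases hba : b < a
      · simp only [bpass, if_pos hba, List.cons.injEq] at h
        obtain ⟨rfl, h⟩ := h
        exact ⟨a :: l, h, hba, Or.inr rfl⟩
      · simp only [bpass, if_neg hba, List.cons.injEq] at h
        obtain ⟨rfl, h⟩ := h
        have hb : b ∈ σ := (h ▸ bpass_perm (b :: l)).mem_iff.mpr List.mem_cons_self
        have hab : b ≠ a := fun hba => hs (hba ▸ hb)
        exact ⟨b :: l, h, by simp only [List.headD_cons]; omega, Or.inl rfl⟩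
  · rintro ⟨ρ, h, hsρ, rfl | rfl⟩ <;> rcases ρ with _ | ⟨b, l⟩
    all_goals simp only [List.headD_cons, List.headD_nil] at hsρ
    · omega
    · simp [bpass, not_lt.mpr hsρ.le, h]
    · omega
    · simp [bpass, hsρ, h]

lemma bpassPreimAbove_cons_of_le {c s : ℕ} {σ : List ℕ} (hσ : σ ≠ []) (hs : s ∉ σ)
    (hsc : s ≤ c) :
    bpassPreimAbove c (s :: σ) = (·.insertIdx 1 s) '' bpassPreimAbove c σ := by
  ext τ
  simp only [bpassPreimAbove, Set.mem_ofPred_eq, Set.mem_image, bpass_eq_cons_iff hσ hs]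
  constructor
  · rintro ⟨⟨ρ, h, hsρ, rfl | rfl⟩, hc⟩
    · simp only [List.headD_cons] at hc; omega
    · rcases ρ with _ | ⟨b, l⟩
      · simp at hsρ
      · exact ⟨b :: l, ⟨h, by simpa using hc⟩, rfl⟩
  · rintro ⟨ρ, ⟨h, hc⟩, rfl⟩
    rcases ρ with _ | ⟨b, l⟩
    · simp at hc
    · simp only [List.headD_cons] at hc
      exact ⟨⟨b :: l, h, by simp only [List.headD_cons]; omega, Or.inr rfl⟩,
        by simpa using hc⟩

lemma bpassPreimAbove_cons_of_lt {c s : ℕ} {σ : List ℕ} (hσ : σ ≠ []) (hs : s ∉ σ)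
    (hcs : c < s) :
    bpassPreimAbove c (s :: σ) =
      (s :: ·) '' bpassPreimAbove s σ ∪ (·.insertIdx 1 s) '' bpassPreimAbove s σ := by
  ext τ
  simp only [bpassPreimAbove, Set.mem_ofPred_eq, Set.mem_union, Set.mem_image,
    bpass_eq_cons_iff hσ hs]
  constructor
  · rintro ⟨⟨ρ, h, hsρ, rfl | rfl⟩, -⟩
    · exact Or.inl ⟨ρ, ⟨h, hsρ⟩, rfl⟩
    · exact Or.inr ⟨ρ, ⟨h, hsρ⟩, rfl⟩
  · rintro (⟨ρ, ⟨h, hsρ⟩, rfl⟩ | ⟨ρ, ⟨h, hsρ⟩, rfl⟩)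
    · exact ⟨⟨ρ, h, hsρ, Or.inl rfl⟩, by simpa using hcs⟩
    · refine ⟨⟨ρ, h, hsρ, Or.inr rfl⟩, ?_⟩
      rcases ρ with _ | ⟨b, l⟩
      · simp at hsρ
      · simp only [List.headD_cons, List.insertIdx_succ_cons, List.insertIdx_zero] at hsρ ⊢
        omega

/-- The two images are disjoint: their first entries are `s` and the first entry of `ρ`,
which exceeds `s`. -/
lemma ncard_bpassPreimAbove_cons_of_lt {c s : ℕ} {σ : List ℕ} (hσ : σ ≠ []) (hs : s ∉ σ)
    (hcs : c < s) :
    (bpassPreimAbove c (s :: σ)).ncard = 2 * (bpassPreimAbove s σ).ncard := by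
  have hdisj : Disjoint ((s :: ·) '' bpassPreimAbove s σ)
      ((·.insertIdx 1 s) '' bpassPreimAbove s σ) := by
    rw [Set.disjoint_left]
    rintro _ ⟨ρ, -, rfl⟩ ⟨ρ', ⟨-, hsρ'⟩, h⟩
    rcases ρ' with _ | ⟨b, l⟩
    · simp at hsρ'
    · simp only [List.insertIdx_succ_cons, List.insertIdx_zero, List.cons.injEq] at h
      simp only [List.headD_cons] at hsρ'
      omega
  have hfin := bpassPreimAbove_finite s σ
  rw [bpassPreimAbove_cons_of_lt hσ hs hcs, Set.ncard_union_eq hdisj (hfin.image _) (hfin.image _),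
    Set.ncard_image_of_injective _ List.cons_injective,
    Set.ncard_image_of_injective _ (List.insertIdx_injective 1 s)]
  ring

lemma ncard_bpassPreimAbove {c M : ℕ} {l : List ℕ} (hnd : (l ++ [M]).Nodup)
    (hlt : ∀ x ∈ l, x < M) (hc : c < M) :
    (bpassPreimAbove c (l ++ [M])).ncard = 2 ^ (ltrCountAbove c (l ++ [M]) - 1) := by
  induction l generalizing c with
  | nil => simp [bpassPreimAbove_singleton hc, ltrCountAbove, hc]
  | cons s l ih =>
    rw [List.cons_append, List.nodup_cons] at hnd
    rw [List.cons_append]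
    have hne : l ++ [M] ≠ [] := by simp
    have hlt' : ∀ x ∈ l, x < M := fun x hx => hlt x (List.mem_cons_of_mem s hx)
    by_cases hcs : c < s
    · have hpos : 0 < ltrCountAbove s (l ++ [M]) :=
        ltrCountAbove_pos (by simp) (hlt s List.mem_cons_self)
      rw [ncard_bpassPreimAbove_cons_of_lt hne hnd.1 hcs,
        ih hnd.2 hlt' (hlt s List.mem_cons_self), ltrCountAbove, if_pos hcs,
        Nat.add_sub_cancel, ← pow_succ', Nat.sub_add_cancel hpos]
    · rw [bpassPreimAbove_cons_of_le hne hnd.1 (not_lt.mp hcs),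
        Set.ncard_image_of_injective _ (List.insertIdx_injective 1 s), ih hnd.2 hlt' hc,
        ltrCountAbove, if_neg hcs]

/-- A permutation of size `n` ending with `n` and having `k` left-to-right maxima
has exactly `2^(k-1)` preimages under bubblesort. -/
theorem stmt_3 (n k : ℕ) (σ : List ℕ) (hσ : IsPermList n σ)
    (hlast : σ.getLast? = some n) (hk : ltrCount σ = k) :
    Set.ncard {τ : List ℕ | IsPermList n τ ∧ bpass τ = σ} = 2 ^ (k - 1) := by
  have hmem : ∀ x ∈ σ, 0 < x ∧ x ≤ n := fun x hx => mem_idList.mp (hσ.mem_iff.mp hx)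
  have hnd : σ.Nodup := hσ.nodup_iff.mpr (nodup_idList n)
  obtain ⟨l, rfl⟩ := List.getLast?_eq_some_iff.mp hlast
  have hn : 0 < n := (hmem n (by simp)).1
  have hlt : ∀ x ∈ l, x < n := fun x hx =>
    lt_of_le_of_ne (hmem x (by simp [hx])).2
      fun h => (List.nodup_append.mp hnd).2.2 x hx n (by simp) h
  have hpreim : {τ | IsPermList n τ ∧ bpass τ = l ++ [n]} = bpassPreimAbove 0 (l ++ [n]) := by
    ext τ
    refine ⟨fun ⟨hτ, h⟩ => ⟨h, ?_⟩,
      fun ⟨h, _⟩ => ⟨(h ▸ bpass_perm τ).symm.trans hσ, h⟩⟩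
    rcases τ with _ | ⟨a, τ⟩
    · simp [bpass] at h
    · exact (mem_idList.mp (hτ.mem_iff.mp List.mem_cons_self)).1
  rw [hpreim, ncard_bpassPreimAbove hnd hlt hn, ← hk,
    ltrCount_eq_ltrCountAbove_zero fun x hx => (hmem x hx).1]
end

section
/- Let π be a permutation of size n, π ≠ id_n, and let m be the length of the longest suffix of π consisting of left-to-right maxima (equivalently, the largest m with π ending in (n−m+1)(n−m+2)⋯n). Then the rooted tree T(π) of iterated bubblesort preimages has depth exactly m. -/
lemma bpass_eq_self_of_pairwise {l : List ℕ} (h : l.Pairwise (· ≤ ·)) : bpass l = l := by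
  induction l using bpass.induct with
  | case1 | case2 => simp only [bpass]
  | case3 a b l hb ih => exact absurd (List.rel_of_pairwise_cons h List.mem_cons_self) (by omega)
  | case4 a b l hb ih => rw [bpass, if_neg hb, ih h.of_cons]

lemma bpass_cons_of_forall_lt {a : ℕ} {l : List ℕ} (h : ∀ x ∈ l, x < a) :
    bpass (a :: l) = l ++ [a] := by
  induction l with
  | nil => simp only [bpass, List.nil_append]
  | cons b l ih =>
    rw [bpass, if_pos (h b List.mem_cons_self), ih fun x hx => h x (List.mem_cons_of_mem b hx)]
    rfl

lemma bpass_append_of_pairwise {q s : List ℕ} (h : ∀ x ∈ q, ∀ y ∈ s, x ≤ y)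
    (hs : s.Pairwise (· ≤ ·)) : bpass (q ++ s) = bpass q ++ s := by
  induction q using bpass.induct with
  | case1 => simpa [bpass] using bpass_eq_self_of_pairwise hs
  | case2 a =>
    have hsorted : (a :: s).Pairwise (· ≤ ·) := List.pairwise_cons.2 ⟨h a List.mem_cons_self, hs⟩
    simpa [bpass] using bpass_eq_self_of_pairwise hsorted
  | case3 a b l hb ih =>
    simp only [List.cons_append, bpass, if_pos hb]
    have hsub : a :: l ⊆ a :: b :: l := List.cons_subset_cons a (List.subset_cons_self b l)
    rw [← List.cons_append, ih fun x hx => h x (hsub hx)]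
  | case4 a b l hb ih =>
    simp only [List.cons_append, bpass, if_neg hb]
    rw [← List.cons_append, ih fun x hx => h x (List.mem_cons_of_mem a hx)]

lemma exists_bpass_cons_eq_append_max (a : ℕ) (l : List ℕ) :
    ∃ q M, bpass (a :: l) = q ++ [M] ∧ ∀ x ∈ a :: l, x ≤ M := by
  induction l generalizing a with
  | nil => exact ⟨[], a, by simp [bpass], by simp⟩
  | cons b l ih =>
    by_cases hb : b < a
    · obtain ⟨q, M, hq, hM⟩ := ih a
      refine ⟨b :: q, M, by rw [bpass, if_pos hb, hq]; rfl, ?_⟩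
      have := hM a List.mem_cons_self
      simp only [List.mem_cons, forall_eq_or_imp] at hM ⊢
      exact ⟨this, by omega, hM.2⟩
    · obtain ⟨q, M, hq, hM⟩ := ih b
      refine ⟨a :: q, M, by rw [bpass, if_neg hb, hq]; rfl, ?_⟩
      have := hM b List.mem_cons_self
      simp only [List.mem_cons, forall_eq_or_imp] at hM ⊢
      exact ⟨by omega, hM⟩

theorem List.takeWhile_congr {α : Type*} {p q : α → Bool} :
    ∀ {l : List α}, (∀ x ∈ l, p x = q x) → l.takeWhile p = l.takeWhile q
  | [], _ => rfl
  | a :: l, h => by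
    simp only [List.takeWhile_cons, h a List.mem_cons_self,
      List.takeWhile_congr fun x hx => h x (List.mem_cons_of_mem a hx)]

lemma isLTRMax_append_iff {q r : List ℕ} {j : ℕ} (hj : j < q.length) :
    IsLTRMax (q ++ r) j ↔ IsLTRMax q j := by
  unfold IsLTRMax
  rw [List.getD_append _ _ _ _ hj]
  constructor
  · rintro ⟨-, h⟩
    exact ⟨hj, fun i hi => List.getD_append _ _ _ _ (hi.trans hj) ▸ h i hi⟩
  · rintro ⟨-, h⟩
    refine ⟨by rw [List.length_append]; omega, fun i hi => ?_⟩
    exact (List.getD_append _ _ _ _ (hi.trans hj)).symm ▸ h i hi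

lemma isLTRMax_append_singleton_length_iff {q : List ℕ} {a : ℕ} :
    IsLTRMax (q ++ [a]) q.length ↔ ∀ x ∈ q, x < a := by
  rw [List.forall_mem_iff_getElem]
  simp only [IsLTRMax, List.length_append, List.length_singleton, Nat.lt_add_one, true_and]
  refine forall_congr' fun i => ?_
  simp +contextual [List.getD_eq_getElem?_getD, List.getElem?_append_left]

lemma suffLen_append_singleton (q : List ℕ) (a : ℕ) :
    suffLen (q ++ [a]) = if ∀ x ∈ q, x < a then suffLen q + 1 else 0 := by
  simp only [suffLen, List.length_append, List.length_singleton, List.range_succ_eq_map,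
    List.takeWhile_cons, List.takeWhile_map, Nat.add_sub_cancel, Nat.sub_zero,
    isLTRMax_append_singleton_length_iff, decide_eq_true_eq]
  split_ifs
  · simp only [List.length_cons, List.length_map]
    congr 2
    refine List.takeWhile_congr fun j hj => ?_
    rw [List.mem_range] at hj
    simp only [Function.comp_apply, decide_eq_decide]
    rw [show q.length - j.succ = q.length - 1 - j by omega, isLTRMax_append_iff (by omega)]
  · rfl

lemma succ_le_suffLen_append_singleton_iff {q : List ℕ} {a t : ℕ} :
    t + 1 ≤ suffLen (q ++ [a]) ↔ (∀ x ∈ q, x < a) ∧ t ≤ suffLen q := by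
  rw [suffLen_append_singleton]
  split_ifs with h
  · exact ⟨fun ht => ⟨h, by omega⟩, fun ⟨_, ht⟩ => by omega⟩
  · exact ⟨fun ht => by omega, fun ⟨h', _⟩ => absurd h' h⟩

lemma idList_eq_range' (n : ℕ) : idList n = List.range' 1 n := by
  rw [idList, List.range'_eq_map_range]
  exact List.map_congr_left fun x _ => Nat.add_comm x 1

lemma bpass_idList (n : ℕ) : bpass (idList n) = idList n :=
  bpass_eq_self_of_pairwise (idList_eq_range' n ▸ List.pairwise_le_range')

namespace IsPermList

variable {n : ℕ} {l : List ℕ}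

lemma mem_iff (h : IsPermList n l) {x : ℕ} : x ∈ l ↔ 1 ≤ x ∧ x ≤ n := by
  rw [List.Perm.mem_iff h, idList_eq_range', List.mem_range'_1]
  omega

lemma lt_of_mem (h : IsPermList n l) {x : ℕ} (hx : x ∈ l) : x < n + 1 :=
  Nat.lt_succ_of_le (h.mem_iff.1 hx).2

lemma bpass (h : IsPermList n l) : IsPermList n (bpass l) := (bpass_perm l).trans h

lemma iterate_bpass (h : IsPermList n l) (k : ℕ) : IsPermList n (_root_.bpass^[k] l) := by
  induction k with
  | zero => exact h
  | succ k ih => rw [Function.iterate_succ_apply']; exact ih.bpass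

lemma of_append_singleton {a : ℕ} (h : IsPermList (n + 1) (l ++ [a]))
    (hle : ∀ x ∈ l, x ≤ a) : a = n + 1 ∧ IsPermList n l := by
  have ha : a ≤ n + 1 := (h.mem_iff.1 (by simp)).2
  have hmem : n + 1 ∈ l ++ [a] := h.mem_iff.2 ⟨by omega, le_rfl⟩
  obtain rfl : a = n + 1 := by
    rcases List.mem_append.1 hmem with hl | hl
    · have := hle _ hl
      omega
    · exact (List.mem_singleton.1 hl).symm
  refine ⟨rfl, (List.perm_append_right_iff [n + 1]).1 ?_⟩
  rwa [IsPermList, idList_eq_range', List.range'_1_concat, ← idList_eq_range', Nat.add_comm 1] at h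

end IsPermList

lemma le_suffLen_append_range' {q : List ℕ} {k : ℕ} (hq : ∀ x ∈ q, x < k) (t : ℕ) :
    t ≤ suffLen (q ++ List.range' k t) := by
  induction t with
  | zero => exact Nat.zero_le _
  | succ t ih =>
    have hlt : ∀ x ∈ q ++ List.range' k t, x < k + t := by
      intro x hx
      rcases List.mem_append.1 hx with hx | hx
      · have := hq x hx; omega
      · have := List.mem_range'_1.1 hx; omega
    rw [List.range'_1_concat, ← List.append_assoc]
    exact succ_le_suffLen_append_singleton_iff.2 ⟨hlt, ih⟩

lemma exists_eq_append_range'_of_le_suffLen {n t : ℕ} {l : List ℕ} (h : IsPermList n l)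
    (ht : t ≤ suffLen l) : ∃ k q, k + t = n ∧ IsPermList k q ∧ l = q ++ List.range' (k + 1) t := by
  induction t generalizing n l with
  | zero => exact ⟨n, l, rfl, h, by simp⟩
  | succ t ih =>
    obtain rfl | ⟨l, a, rfl⟩ := l.eq_nil_or_concat
    · exact absurd ht (by simp [suffLen])
    rw [List.concat_eq_append] at h ht ⊢
    obtain ⟨hlt, hl⟩ := succ_le_suffLen_append_singleton_iff.1 ht
    obtain _ | n := n
    · simpa [idList] using h.length_eq
    obtain ⟨rfl, hperm⟩ := h.of_append_singleton fun x hx => (hlt x hx).le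
    obtain ⟨k, q, rfl, hq, rfl⟩ := ih hperm hl
    exact ⟨k, q, by omega, hq, by rw [List.range'_1_concat, List.append_assoc, Nat.add_right_comm]⟩

lemma suffLen_lt_suffLen_bpass {n : ℕ} {l : List ℕ} (h : IsPermList n l) (hne : l ≠ idList n) :
    suffLen l < suffLen (bpass l) := by
  set t := suffLen l
  obtain ⟨k, q, hkn, hq, hl⟩ := exists_eq_append_range'_of_le_suffLen h le_rfl
  rw [hl] at hne ⊢
  obtain _ | k := k
  · rw [show q = [] from List.Perm.eq_nil (by simpa [IsPermList, idList] using hq)] at hne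
    exact absurd (by rw [idList_eq_range', ← hkn]; simp) hne
  obtain _ | ⟨a, q⟩ := q
  · simpa [idList] using hq.length_eq
  obtain ⟨q', M, hbq, hM⟩ := exists_bpass_cons_eq_append_max a q
  obtain ⟨rfl, hq'⟩ : M = k + 1 ∧ IsPermList k q' := by
    refine IsPermList.of_append_singleton (hbq ▸ (bpass_perm _).trans hq) fun x hx => hM x ?_
    exact (bpass_perm _).subset (hbq ▸ List.mem_append_left _ hx)
  have hbl : bpass (a :: q ++ List.range' (k + 2) t) = q' ++ List.range' (k + 1) (t + 1) := by
    rw [bpass_append_of_pairwise ?_ List.pairwise_le_range', hbq, List.range'_succ,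
      List.append_assoc]
    · rfl
    intro x hx y hy
    have := hq.lt_of_mem hx
    have := List.mem_range'_1.1 hy
    omega
  rw [hbl]
  exact le_suffLen_append_range' (fun x hx => hq'.lt_of_mem hx) _

lemma exists_bpass_eq_of_lt_suffLen {n t : ℕ} {l : List ℕ} (h : IsPermList n l)
    (ht : t < suffLen l) : ∃ ρ, IsPermList n ρ ∧ t ≤ suffLen ρ ∧ bpass ρ = l := by
  obtain ⟨k, q, rfl, hq, rfl⟩ := exists_eq_append_range'_of_le_suffLen h ht
  have hq_lt : ∀ x ∈ (k + 1) :: q, x < k + 1 + 1 := by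
    refine List.forall_mem_cons.2 ⟨Nat.lt_succ_self _, fun x hx => ?_⟩
    exact (hq.lt_of_mem hx).trans (Nat.lt_succ_self _)
  refine ⟨(k + 1) :: q ++ List.range' (k + 1 + 1) t, ?_, le_suffLen_append_range' hq_lt t, ?_⟩
  · exact List.perm_middle.symm.trans (List.range'_succ ▸ h)
  · rw [bpass_append_of_pairwise ?_ List.pairwise_le_range',
      bpass_cons_of_forall_lt fun x => hq.lt_of_mem, List.range'_succ, List.append_assoc]
    · rfl
    intro x hx y hy
    have := hq_lt x hx
    have := List.mem_range'_1.1 hy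
    omega

lemma suffLen_add_le_suffLen_iterate_bpass {n k : ℕ} {l : List ℕ} (h : IsPermList n l)
    (hne : bpass^[k] l ≠ idList n) : suffLen l + k ≤ suffLen (bpass^[k] l) := by
  induction k with
  | zero => rfl
  | succ k ih =>
    rw [Function.iterate_succ_apply'] at hne ⊢
    have hne' : bpass^[k] l ≠ idList n := fun he => hne (by rw [he, bpass_idList])
    have := suffLen_lt_suffLen_bpass (h.iterate_bpass k) hne'
    have := ih hne'
    omega

lemma iterate_bpass_ne_self {n k : ℕ} {l : List ℕ} (h : IsPermList n l) (hne : l ≠ idList n)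
    (hk : 0 < k) : bpass^[k] l ≠ l := by
  intro hl
  have := suffLen_add_le_suffLen_iterate_bpass h (k := k) (by rwa [hl])
  rw [hl] at this
  omega

lemma exists_iterate_bpass_eq_of_le_suffLen {n t : ℕ} {l : List ℕ} (h : IsPermList n l)
    (ht : t ≤ suffLen l) : ∃ σ, IsPermList n σ ∧ bpass^[t] σ = l := by
  induction t generalizing l with
  | zero => exact ⟨l, h, rfl⟩
  | succ t ih =>
    obtain ⟨ρ, hρ, htρ, rfl⟩ := exists_bpass_eq_of_lt_suffLen h ht
    obtain ⟨σ, hσ, rfl⟩ := ih hρ htρ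
    exact ⟨σ, hσ, Function.iterate_succ_apply' ..⟩

/-- For `π ≠ id_n` whose longest suffix of left-to-right maxima has length `m`,
the tree `T(π)` has depth exactly `m`: every node has height at most `m`,
and some node has height `m`. -/
theorem stmt_11 (n m : ℕ) (π : List ℕ) (hπ : IsPermList n π) (hne : π ≠ idList n)
    (hm : suffLen π = m) :
    (∀ σ j, IsNodeAt n π σ j → j ≤ m) ∧ (∃ σ, IsNodeAt n π σ m) := by
  refine ⟨fun σ j ⟨hσ, hσπ, _⟩ => ?_, ?_⟩
  · have := suffLen_add_le_suffLen_iterate_bpass hσ (hσπ ▸ hne)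
    rw [hσπ] at this
    omega
  · obtain ⟨σ, hσ, hσπ⟩ := exists_iterate_bpass_eq_of_le_suffLen hπ hm.ge
    refine ⟨σ, hσ, hσπ, fun i hi hiπ => iterate_bpass_ne_self hπ hne (Nat.sub_pos_of_lt hi) ?_⟩
    rw [← hiπ, ← Function.iterate_add_apply, Nat.sub_add_cancel hi.le, hσπ, hiπ]
end
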